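/- arXiv:1809.05191 — 2 statements merged into one kernel-verified Lean document; each statement's English description precedes it below -/
import Mathlib

section
/- For every n ≥ 5 there is a dense open subset W of (ℙ¹(ℂ))ⁿ such that for every (p₁,…,p_n) ∈ W the points p₁,…,p_n are pairwise distinct and the divisor ⟨p₁⟩+⋯+⟨p_n⟩ has trivial stabilizer: the only g ∈ PGL₂(ℂ) with g({p₁,…,p_n}) = {p₁,…,p_n} is the identity. -/
open scoped MatrixGroups

noncomputable section

/-- The complex projective line `ℙ¹(ℂ)`, with its standard (quotient) topology. -/
abbrev ProjLine := Projectivization ℂ (Fin 2 → ℂ)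

instance : TopologicalSpace ProjLine :=
  inferInstanceAs (TopologicalSpace (Quotient (projectivizationSetoid ℂ (Fin 2 → ℂ))))

/-- The projective transformation of `ℙ¹(ℂ)` induced by `g ∈ GL₂(ℂ)`; these are exactly
the elements of `PGL₂(ℂ)`, and an element of `PGL₂(ℂ)` is the identity iff the induced
transformation fixes every point. -/
def pAct (g : GL (Fin 2) ℂ) (p : ProjLine) : ProjLine :=
  Projectivization.map
    (LinearMap.GeneralLinearGroup.toLinearEquiv (Matrix.GeneralLinearGroup.toLin g)).toLinearMap
    (LinearMap.GeneralLinearGroup.toLinearEquiv (Matrix.GeneralLinearGroup.toLin g)).injective p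

/-!
Represent the points by vectors `v i ∈ ℂ²`. For a permutation `σ ≠ 1` choose `a` with
`σ a ≠ a` and three more indices avoiding `a` and `σ a` (this needs `n ≥ 5`). A matrix mapping
these four lines `v i` into the lines `v (σ i)` is a nonzero solution of a homogeneous `4 × 4`
linear system, so it exists exactly where a polynomial determinant vanishes. That determinant is
not identically zero: the three auxiliary conditions determine the matrix up to a scalar, so moving
the single point `v (σ a)` breaks the fourth one. Away from the zero sets of these finitely many
determinants, a dense open set that descends to `(ℙ¹)ⁿ` because the quotient map is open, every
stabilizing `g` must fix each point; fixing three distinct points forces `g` to be scalar.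
-/

open Function Matrix

section Wedge

variable {R : Type*} [CommRing R]

def wedge (x y : Fin 2 → R) : R := x 0 * y 1 - x 1 * y 0

@[simp]
lemma wedge_self (x : Fin 2 → R) : wedge x x = 0 := by
  rw [wedge, mul_comm, sub_self]

lemma wedge_swap (x y : Fin 2 → R) : wedge y x = -wedge x y := by
  simp only [wedge]; ring

lemma wedge_smul_left (c : R) (x y : Fin 2 → R) : wedge (c • x) y = c * wedge x y := by
  simp only [wedge, Pi.smul_apply, smul_eq_mul]; ring

lemma wedge_sub_left (x y z : Fin 2 → R) : wedge (x - y) z = wedge x z - wedge y z := by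
  simp only [wedge, Pi.sub_apply]; ring

lemma wedge_mulVec (M : Matrix (Fin 2) (Fin 2) R) (x y : Fin 2 → R) :
    wedge (M *ᵥ x) (M *ᵥ y) = M.det * wedge x y := by
  simp only [wedge, mulVec, dotProduct, Fin.sum_univ_two, det_fin_two]; ring

/-- Cramer's rule in dimension two. -/
lemma wedge_smul_eq_add (u v x : Fin 2 → R) :
    wedge u v • x = wedge x v • u + wedge u x • v := by
  ext i
  fin_cases i <;> simp only [wedge, Fin.zero_eta, Fin.mk_one, Pi.smul_apply, smul_eq_mul,
    Pi.add_apply] <;> ring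

lemma ne_zero_left_of_wedge_ne_zero {x y : Fin 2 → R} (h : wedge x y ≠ 0) : x ≠ 0 := by
  rintro rfl; simp [wedge] at h

lemma eq_zero_of_mulVec_eq_zero_of_wedge_ne_zero [IsDomain R] {M : Matrix (Fin 2) (Fin 2) R}
    {u v : Fin 2 → R} (huv : wedge u v ≠ 0) (hu : M *ᵥ u = 0) (hv : M *ᵥ v = 0) : M = 0 := by
  refine ext_of_mulVec_single fun i => ?_
  have h := congrArg (M *ᵥ ·) (wedge_smul_eq_add u v (Pi.single i 1))
  simp only [mulVec_add, mulVec_smul, hu, hv, smul_zero, add_zero] at h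
  rw [zero_mulVec]
  exact (smul_eq_zero.1 h).resolve_left huv

end Wedge

section Field

variable {K : Type*} [Field K]

lemma exists_eq_smul_of_wedge_eq_zero {a b : Fin 2 → K} (h : wedge a b = 0) (hb : b ≠ 0) :
    ∃ c : K, a = c • b := by
  have hb' : b 0 ≠ 0 ∨ b 1 ≠ 0 := by
    by_contra! hb0
    exact hb (funext fun i => by fin_cases i <;> simp [hb0])
  rw [wedge, sub_eq_zero] at h
  rcases hb' with hb0 | hb1
  · refine ⟨a 0 / b 0, funext fun i => ?_⟩
    fin_cases i
    · simp [hb0]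
    · simp only [Fin.mk_one, Pi.smul_apply, smul_eq_mul]
      field_simp
      linear_combination -h
  · refine ⟨a 1 / b 1, funext fun i => ?_⟩
    fin_cases i
    · simp only [Fin.zero_eta, Pi.smul_apply, smul_eq_mul]
      field_simp
      linear_combination h
    · simp [hb1]

lemma wedge_eq_zero_trans {a x b : Fin 2 → K} (hx : x ≠ 0) (hax : wedge a x = 0)
    (hxb : wedge x b = 0) : wedge a b = 0 := by
  obtain ⟨c, rfl⟩ := exists_eq_smul_of_wedge_eq_zero hax hx
  rw [wedge_smul_left, hxb, mul_zero]

lemma Projectivization.mk_eq_mk_iff_wedge {v w : Fin 2 → K} (hv : v ≠ 0) (hw : w ≠ 0) :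
    mk K v hv = mk K w hw ↔ wedge v w = 0 := by
  rw [mk_eq_mk_iff']
  constructor
  · rintro ⟨a, rfl⟩
    rw [wedge_smul_left, wedge_self, mul_zero]
  · intro h
    obtain ⟨c, rfl⟩ := exists_eq_smul_of_wedge_eq_zero h hw
    exact ⟨c, rfl⟩

variable {u w : Fin 3 → Fin 2 → K} {M M' : Matrix (Fin 2) (Fin 2) K}

lemma det_ne_zero_of_wedge_mulVec_eq_zero (hu : Pairwise fun i j => wedge (u i) (u j) ≠ 0)
    (hw : Pairwise fun i j => wedge (w i) (w j) ≠ 0) (hM : M ≠ 0)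
    (h : ∀ k, wedge (M *ᵥ u k) (w k) = 0) : M.det ≠ 0 := by
  intro hdet
  -- the image of a singular `M` is a single line, which cannot contain two of the `w k`
  have hker : ∀ i j, i ≠ j → M *ᵥ u i = 0 ∨ M *ᵥ u j = 0 := by
    intro i j hij
    by_contra! hne
    have himg : wedge (M *ᵥ u i) (M *ᵥ u j) = 0 := by rw [wedge_mulVec, hdet, zero_mul]
    refine hw hij (wedge_eq_zero_trans hne.2 ?_ (h j))
    exact wedge_eq_zero_trans hne.1 (by rw [wedge_swap, h i, neg_zero]) himg
  have hpair : ∀ i j, i ≠ j → M *ᵥ u i = 0 → M *ᵥ u j = 0 → False := fun i j hij hi hj =>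
    hM (eq_zero_of_mulVec_eq_zero_of_wedge_ne_zero (hu hij) hi hj)
  by_cases h0 : M *ᵥ u 0 = 0
  · rcases hker 1 2 (by decide) with h1 | h2
    · exact hpair 0 1 (by decide) h0 h1
    · exact hpair 0 2 (by decide) h0 h2
  · exact hpair 1 2 (by decide) ((hker 0 1 (by decide)).resolve_left h0)
      ((hker 0 2 (by decide)).resolve_left h0)

lemma exists_eq_smul_of_wedge_mulVec_eq_zero (hu : Pairwise fun i j => wedge (u i) (u j) ≠ 0)
    (hw : Pairwise fun i j => wedge (w i) (w j) ≠ 0) (hM' : M' ≠ 0)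
    (h : ∀ k, wedge (M *ᵥ u k) (w k) = 0) (h' : ∀ k, wedge (M' *ᵥ u k) (w k) = 0) :
    ∃ c : K, M = c • M' := by
  have hu₀ : u 0 ≠ 0 := ne_zero_left_of_wedge_ne_zero (hu (by decide : (0 : Fin 3) ≠ 1))
  have hw₀ : w 0 ≠ 0 := ne_zero_left_of_wedge_ne_zero (hw (by decide : (0 : Fin 3) ≠ 1))
  have hM'u₀ : M' *ᵥ u 0 ≠ 0 := fun h0 =>
    hu₀ (eq_zero_of_mulVec_eq_zero (det_ne_zero_of_wedge_mulVec_eq_zero hu hw hM' h') h0)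
  obtain ⟨c, hc⟩ := exists_eq_smul_of_wedge_eq_zero
    (wedge_eq_zero_trans hw₀ (h 0) (by rw [wedge_swap, h' 0, neg_zero])) hM'u₀
  refine ⟨c, by_contra fun hne => ?_⟩
  -- `M - c • M'` kills `u 0`, yet satisfies the same constraints
  refine det_ne_zero_of_wedge_mulVec_eq_zero hu hw (sub_ne_zero.2 hne) (fun k => ?_)
    (exists_mulVec_eq_zero_iff.1 ⟨u 0, hu₀, by rw [sub_mulVec, smul_mulVec, hc, sub_self]⟩)
  rw [sub_mulVec, smul_mulVec, wedge_sub_left, wedge_smul_left, h k, h' k, mul_zero, sub_zero]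

lemma wedge_eq_zero_of_wedge_mulVec_eq_zero (hu : Pairwise fun i j => wedge (u i) (u j) ≠ 0)
    (hw : Pairwise fun i j => wedge (w i) (w j) ≠ 0) (hM : M ≠ 0) (hM' : M' ≠ 0)
    (h : ∀ k, wedge (M *ᵥ u k) (w k) = 0) (h' : ∀ k, wedge (M' *ᵥ u k) (w k) = 0)
    {x y y' : Fin 2 → K} (hx : x ≠ 0) (hy : wedge (M *ᵥ x) y = 0)
    (hy' : wedge (M' *ᵥ x) y' = 0) : wedge y y' = 0 := by
  obtain ⟨c, rfl⟩ := exists_eq_smul_of_wedge_mulVec_eq_zero hu hw hM' h h'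
  have hMx : (c • M') *ᵥ x ≠ 0 := fun h0 =>
    hx (eq_zero_of_mulVec_eq_zero (det_ne_zero_of_wedge_mulVec_eq_zero hu hw hM h) h0)
  have hM'x : M' *ᵥ x ≠ 0 := fun h0 => hMx (by rw [smul_mulVec, h0, smul_zero])
  have hpar : wedge ((c • M') *ᵥ x) (M' *ᵥ x) = 0 := by
    rw [smul_mulVec, wedge_smul_left, wedge_self, mul_zero]
  refine wedge_eq_zero_trans hM'x ?_ hy'
  exact wedge_eq_zero_trans hMx (by rw [wedge_swap, hy, neg_zero]) hpar

end Field

section Constraints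

variable {K : Type*} [Field K]

def constraintMatrix (u w : Fin 4 → Fin 2 → K) : Matrix (Fin 4) (Fin 4) K :=
  Matrix.of fun k => ![u k 0 * w k 1, u k 1 * w k 1, -(u k 0 * w k 0), -(u k 1 * w k 0)]

lemma constraintMatrix_mulVec (u w : Fin 4 → Fin 2 → K) (m : Fin 4 → K) :
    constraintMatrix u w *ᵥ m = fun k => wedge (!![m 0, m 1; m 2, m 3] *ᵥ u k) (w k) := by
  ext k
  simp only [constraintMatrix, wedge, mulVec, dotProduct, Fin.sum_univ_four, Fin.sum_univ_two,
    of_apply, cons_val, cons_val_zero, cons_val_one]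
  ring

lemma det_constraintMatrix_eq_zero_iff {u w : Fin 4 → Fin 2 → K} :
    (constraintMatrix u w).det = 0 ↔
      ∃ M : Matrix (Fin 2) (Fin 2) K, M ≠ 0 ∧ ∀ k, wedge (M *ᵥ u k) (w k) = 0 := by
  rw [← exists_mulVec_eq_zero_iff]
  constructor
  · rintro ⟨m, hm, hum⟩
    refine ⟨!![m 0, m 1; m 2, m 3], fun h0 => hm ?_, fun k => ?_⟩
    · simp only [← Matrix.ext_iff, Fin.forall_fin_two, of_apply, cons_val', cons_val_fin_one,
        cons_val_zero, cons_val_one, Matrix.zero_apply] at h0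
      ext k
      fin_cases k <;> simp [h0]
    · simpa [constraintMatrix_mulVec] using congrFun hum k
  · rintro ⟨M, hM, hMu⟩
    refine ⟨![M 0 0, M 0 1, M 1 0, M 1 1], fun h0 => hM ?_, ?_⟩
    · simp only [funext_iff, Fin.forall_fin_succ, Pi.zero_apply, cons_val_zero, cons_val_succ,
        cons_val_fin_one, forall_const] at h0
      ext i j
      fin_cases i <;> fin_cases j <;> simp [h0]
    · rw [constraintMatrix_mulVec]
      ext k
      simpa [← eta_fin_two M] using hMu k

end Constraints

section Rigid

variable {K : Type*} [Field K]

/-- Singular `M` are allowed so that rigidity is cut out by the nonvanishing of determinants. -/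
def IsRigid {ι : Type*} (v : ι → Fin 2 → K) : Prop :=
  ∀ σ : Equiv.Perm ι, σ ≠ 1 → ∀ M : Matrix (Fin 2) (Fin 2) K, M ≠ 0 →
    ∃ i, wedge (M *ᵥ v i) (v (σ i)) ≠ 0

lemma exists_apply_ne_and_embedding_avoiding {n : ℕ} (hn : 5 ≤ n) {σ : Equiv.Perm (Fin n)}
    (hσ : σ ≠ 1) : ∃ a, σ a ≠ a ∧ ∃ j : Fin 3 ↪ Fin n, ∀ k, j k ≠ a ∧ j k ≠ σ a := by
  obtain ⟨a, ha⟩ : ∃ a, σ a ≠ a := by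
    by_contra! h
    exact hσ (Equiv.ext h)
  refine ⟨a, ha, ?_⟩
  have hcard : Fintype.card (Fin 3) ≤ Fintype.card ({a, σ a}ᶜ : Finset (Fin n)) := by
    simp only [Fintype.card_fin, Fintype.card_coe, Finset.card_compl, Finset.card_pair ha.symm]
    omega
  obtain ⟨j⟩ := Function.Embedding.nonempty_of_card_le hcard
  refine ⟨j.trans (Function.Embedding.subtype _), fun k => ?_⟩
  simpa [not_or] using (j k).2

lemma pairwise_wedge_ne_zero {ι : Type*} {t : ι → K} (ht : Injective t) :
    Pairwise fun i j => wedge ![t i, 1] ![t j, 1] ≠ 0 := fun i j hij => by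
  simpa [wedge, sub_eq_zero] using ht.ne hij

lemma exists_det_constraintMatrix_ne_zero [CharZero K] {n : ℕ} (hn : 5 ≤ n)
    {σ : Equiv.Perm (Fin n)} (hσ : σ ≠ 1) :
    ∃ J : Fin 4 → Fin n, ∃ v : Fin n → Fin 2 → K,
      (constraintMatrix (v ∘ J) (v ∘ σ ∘ J)).det ≠ 0 := by
  obtain ⟨a, ha, j, hj⟩ := exists_apply_ne_and_embedding_avoiding hn hσ
  let t : Fin n → K := fun i => ((i : ℕ) : K)
  have ht : Injective t := Nat.cast_injective.comp Fin.val_injective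
  -- distinct points of the affine line, except that the point `σ a` is moved to `z`
  let v : K → Fin n → Fin 2 → K := fun z => update (fun i => ![t i, 1]) (σ a) ![z, 1]
  refine ⟨Fin.cons a j, ?_⟩
  by_contra! h
  have hrealize : ∀ z, ∃ M : Matrix (Fin 2) (Fin 2) K, M ≠ 0 ∧
      (∀ k, wedge (M *ᵥ ![t (j k), 1]) ![t (σ (j k)), 1] = 0) ∧
      wedge (M *ᵥ ![t a, 1]) ![z, 1] = 0 := by
    intro z
    obtain ⟨M, hM, hMk⟩ := det_constraintMatrix_eq_zero_iff.1 (h (v z))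
    rw [Fin.forall_fin_succ] at hMk
    refine ⟨M, hM, fun k => ?_, ?_⟩
    · simpa [v, update_of_ne (hj k).2, update_of_ne (σ.injective.ne (hj k).1)] using hMk.2 k
    · simpa [v, update_of_ne ha.symm] using hMk.1
  obtain ⟨M₀, hM₀, h₀, h₀a⟩ := hrealize 0
  obtain ⟨M₁, hM₁, h₁, h₁a⟩ := hrealize 1
  have h₀₁ : wedge ![(0 : K), 1] ![1, 1] = 0 := wedge_eq_zero_of_wedge_mulVec_eq_zero
    (pairwise_wedge_ne_zero (ht.comp j.injective))
    (pairwise_wedge_ne_zero (ht.comp (σ.injective.comp j.injective))) hM₀ hM₁ h₀ h₁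
    (by simp) h₀a h₁a
  simp [wedge] at h₀₁

end Rigid

section Generic

open Set

lemma AnalyticOnNhd.dense_setOf_ne_zero {𝕜 E F : Type*} [NontriviallyNormedField 𝕜]
    [NormedAddCommGroup E] [NormedSpace 𝕜 E] [PreconnectedSpace E] [NormedAddCommGroup F]
    [NormedSpace 𝕜 F] {f : E → F} (hf : AnalyticOnNhd 𝕜 f univ) (h : ∃ x, f x ≠ 0) :
    Dense {x | f x ≠ 0} := by
  change Dense {x | f x = 0}ᶜ
  rw [← interior_eq_empty_iff_dense_compl, eq_empty_iff_forall_notMem]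
  intro x hx
  obtain ⟨y, hy⟩ := h
  exact hy (hf.eqOn_zero_of_preconnected_of_eventuallyEq_zero isPreconnected_univ (mem_univ x)
    (mem_interior_iff_mem_nhds.1 hx) (mem_univ y))

lemma AnalyticOnNhd.matrix_det {𝕜 E m : Type*} [NontriviallyNormedField 𝕜]
    [NormedAddCommGroup E] [NormedSpace 𝕜 E] [Fintype m] [DecidableEq m] {A : E → Matrix m m 𝕜}
    {s : Set E} (hA : ∀ i j, AnalyticOnNhd 𝕜 (fun x => A x i j) s) :
    AnalyticOnNhd 𝕜 (fun x => (A x).det) s := by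
  have h := AnalyticOnNhd.aeval_mvPolynomial (f := fun x (p : m × m) => A x p.1 p.2)
    (fun p => hA p.1 p.2) (det (mvPolynomialX m m 𝕜))
  simpa only [AlgHom.map_det, mvPolynomialX_mapMatrix_aeval] using h

lemma analyticOnNhd_det_constraintMatrix {n : ℕ} (J : Fin 4 → Fin n) (τ : Fin n → Fin n) :
    AnalyticOnNhd ℂ (fun v : Fin n → Fin 2 → ℂ => (constraintMatrix (v ∘ J) (v ∘ τ ∘ J)).det)
      univ := by
  have hc : ∀ i j, AnalyticOnNhd ℂ (fun v : Fin n → Fin 2 → ℂ => v i j) univ := fun i j =>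
    ((ContinuousLinearMap.proj j).comp
      (ContinuousLinearMap.proj (R := ℂ) (φ := fun _ : Fin n => Fin 2 → ℂ) i)).analyticOnNhd _
  refine AnalyticOnNhd.matrix_det fun k l => ?_
  fin_cases l
  · exact (hc _ _).mul (hc _ _)
  · exact (hc _ _).mul (hc _ _)
  · exact ((hc _ _).mul (hc _ _)).neg
  · exact ((hc _ _).mul (hc _ _)).neg

lemma exists_isOpen_dense_isRigid {n : ℕ} (hn : 5 ≤ n) :
    ∃ G : Set (Fin n → Fin 2 → ℂ), IsOpen G ∧ Dense G ∧ ∀ v ∈ G, IsRigid v := by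
  choose J v hv using fun σ : {σ : Equiv.Perm (Fin n) // σ ≠ 1} =>
    exists_det_constraintMatrix_ne_zero (K := ℂ) hn σ.2
  let f : {σ : Equiv.Perm (Fin n) // σ ≠ 1} → (Fin n → Fin 2 → ℂ) → ℂ := fun σ v =>
    (constraintMatrix (v ∘ J σ) (v ∘ σ.1 ∘ J σ)).det
  have hf : ∀ σ, AnalyticOnNhd ℂ (f σ) univ := fun σ =>
    analyticOnNhd_det_constraintMatrix (J σ) σ.1
  have hopen : ∀ σ, IsOpen {v | f σ v ≠ 0} := fun σ =>
    isOpen_ne_fun (hf σ).continuous continuous_const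
  refine ⟨⋂ σ, {v | f σ v ≠ 0}, isOpen_iInter_of_finite hopen,
    dense_iInter_of_isOpen hopen fun σ => (hf σ).dense_setOf_ne_zero ⟨v σ, hv σ⟩, ?_⟩
  intro w hw σ hσ M hM
  by_contra! hMw
  exact mem_iInter.1 hw ⟨σ, hσ⟩ (det_constraintMatrix_eq_zero_iff.2 ⟨M, hM, fun k => hMw _⟩)

end Generic

section ProjectiveLine

open Set Topology Projectivization

lemma isOpenQuotientMap_mk' :
    IsOpenQuotientMap (mk' ℂ : {v : Fin 2 → ℂ // v ≠ 0} → ProjLine) := by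
  refine ⟨Quotient.mk''_surjective, continuous_quotient_mk', fun U hU => ?_⟩
  have hsat : mk' ℂ ⁻¹' (mk' ℂ '' U) = ⋃ c : ℂˣ,
      (fun x : {v : Fin 2 → ℂ // v ≠ 0} => c • (x : Fin 2 → ℂ)) ⁻¹' (Subtype.val '' U) := by
    ext x
    simp [mk_eq_mk_iff]
  change IsOpen (mk' ℂ ⁻¹' (mk' ℂ '' U))
  rw [hsat]
  exact isOpen_iUnion fun c => (isOpen_ne.isOpenMap_subtype_val U hU).preimage (by fun_prop)

lemma exists_isOpen_dense_image_mk {n : ℕ} {G : Set (Fin n → Fin 2 → ℂ)} (hGo : IsOpen G)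
    (hGd : Dense G) :
    ∃ W : Set (Fin n → ProjLine), IsOpen W ∧ Dense W ∧
      ∀ p ∈ W, ∃ v ∈ G, ∃ hv : ∀ i, v i ≠ 0, p = fun i => mk ℂ (v i) (hv i) := by
  have hmk := IsOpenQuotientMap.piMap fun _ : Fin n => isOpenQuotientMap_mk'
  have hval : IsOpenEmbedding (Pi.map fun _ : Fin n =>
      (Subtype.val : {v : Fin 2 → ℂ // v ≠ 0} → Fin 2 → ℂ)) :=
    .piMap fun _ => isOpen_ne.isOpenEmbedding_subtypeVal
  refine ⟨_ '' (_ ⁻¹' G), hmk.isOpenMap _ (hGo.preimage hval.continuous),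
    hmk.surjective.denseRange.dense_image hmk.continuous (hGd.preimage hval.isOpenMap), ?_⟩
  rintro _ ⟨w, hw, rfl⟩
  exact ⟨_, hw, fun i => (w i).2, rfl⟩

lemma pAct_mk_eq_mk_iff (g : GL (Fin 2) ℂ) {v w : Fin 2 → ℂ} (hv : v ≠ 0) (hw : w ≠ 0) :
    pAct g (mk ℂ v hv) = mk ℂ w hw ↔ wedge ((g : Matrix (Fin 2) (Fin 2) ℂ) *ᵥ v) w = 0 := by
  rw [pAct, map_mk, mk_eq_mk_iff_wedge]
  rfl

lemma pAct_injective (g : GL (Fin 2) ℂ) : Injective (pAct g) :=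
  map_injective _ (LinearEquiv.injective _)

lemma exists_perm_apply_eq {ι α : Type*} [Finite ι] {p : ι → α} (hp : Injective p)
    {f : α → α} (hf : Injective f) (hmaps : MapsTo f (range p) (range p)) :
    ∃ σ : Equiv.Perm ι, ∀ i, f (p i) = p (σ i) := by
  choose τ hτ using fun i => hmaps (mem_range_self i)
  have hτ_inj : Injective τ := fun i j hij => hp (hf (by rw [← hτ i, ← hτ j, hij]))
  exact ⟨Equiv.ofBijective τ hτ_inj.bijective_of_finite, fun i => (hτ i).symm⟩

lemma IsRigid.injective_mk {K ι : Type*} [Field K] {v : ι → Fin 2 → K} (h : IsRigid v)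
    (hv : ∀ i, v i ≠ 0) : Injective fun i => mk K (v i) (hv i) := by
  classical
  intro i j hij
  by_contra hne
  have hwedge : wedge (v i) (v j) = 0 := (mk_eq_mk_iff_wedge _ _).1 hij
  -- the identity matrix would realize the transposition of `i` and `j`
  obtain ⟨k, hk⟩ := h (Equiv.swap i j) (Equiv.swap_eq_one_iff.not.2 hne) 1 one_ne_zero
  rw [one_mulVec, Equiv.swap_apply_def] at hk
  split_ifs at hk with hki hkj
  · exact hk (hki ▸ hwedge)
  · exact hk (by rw [hkj, wedge_swap, hwedge, neg_zero])
  · exact hk (wedge_self _)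

lemma IsRigid.pAct_eq_self {n : ℕ} (hn : 3 ≤ n) {v : Fin n → Fin 2 → ℂ} (h : IsRigid v)
    (hv : ∀ i, v i ≠ 0) {g : GL (Fin 2) ℂ}
    (hg : pAct g '' range (fun i => mk ℂ (v i) (hv i)) = range fun i => mk ℂ (v i) (hv i))
    (q : ProjLine) : pAct g q = q := by
  have hp := h.injective_mk hv
  obtain ⟨σ, hσ⟩ := exists_perm_apply_eq hp (pAct_injective g)
    fun _ hx => hg ▸ mem_image_of_mem _ hx
  have hgv : ∀ i, wedge ((g : Matrix (Fin 2) (Fin 2) ℂ) *ᵥ v i) (v (σ i)) = 0 := fun i =>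
    (pAct_mk_eq_mk_iff g _ _).1 (hσ i)
  obtain rfl : σ = 1 := by
    by_contra hσ₁
    obtain ⟨i, hi⟩ := h σ hσ₁ g g.ne_zero
    exact hi (hgv i)
  -- `g` fixes three distinct points, hence is a scalar matrix
  let u : Fin 3 → Fin 2 → ℂ := fun k => v (Fin.castLE hn k)
  have hu : Pairwise fun k l => wedge (u k) (u l) ≠ 0 := fun k l hkl =>
    (mk_eq_mk_iff_wedge _ _).not.1 (hp.ne ((Fin.castLE_injective hn).ne hkl))
  obtain ⟨c, hc⟩ := exists_eq_smul_of_wedge_mulVec_eq_zero hu hu one_ne_zero (fun k => hgv _)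
    (fun k => by rw [one_mulVec, wedge_self])
  rw [← q.mk_rep, pAct_mk_eq_mk_iff, hc, smul_mulVec, one_mulVec, wedge_smul_left, wedge_self,
    mul_zero]

end ProjectiveLine

/-- **Statement 9.** For every `n ≥ 5` there is a dense open subset `W` of `(ℙ¹(ℂ))ⁿ` such
that for every tuple in `W` the points are pairwise distinct and the corresponding divisor
`⟨p₁⟩ + ⋯ + ⟨pₙ⟩` has trivial stabilizer in `PGL₂(ℂ)`: the only projective transformation
mapping the set `{p₁,…,pₙ}` onto itself is the identity. -/
theorem generic_divisor_trivial_stabilizer (n : ℕ) (hn : 5 ≤ n) :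
    ∃ W : Set (Fin n → ProjLine), IsOpen W ∧ Dense W ∧
      ∀ p ∈ W, (∀ i j : Fin n, i ≠ j → p i ≠ p j) ∧
        ∀ g : GL (Fin 2) ℂ, pAct g '' Set.range p = Set.range p →
          ∀ q : ProjLine, pAct g q = q := by
  obtain ⟨G, hGo, hGd, hG⟩ := exists_isOpen_dense_isRigid hn
  obtain ⟨W, hWo, hWd, hW⟩ := exists_isOpen_dense_image_mk hGo hGd
  refine ⟨W, hWo, hWd, fun p hp => ?_⟩
  obtain ⟨v, hvG, hv, rfl⟩ := hW p hp
  exact ⟨fun i j => ((hG v hvG).injective_mk hv).ne,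
    fun g hg => (hG v hvG).pAct_eq_self (by omega) hv hg⟩
end
end

section
/- Let a, b be nonzero complex numbers such that b/a is not a rational number, and let x₀, y₀ be nonzero complex numbers. If a polynomial f ∈ ℂ[x,y] satisfies f(e^{at}·x₀, e^{bt}·y₀) = 0 for every t ∈ ℂ, then f = 0. Consequently no algebraic curve in the affine plane contains the full orbit {(e^{at}x₀, e^{bt}y₀) : t ∈ ℂ}. -/
/-!
Expanding `f` in monomials, `f (e^{at} x₀, e^{bt} y₀) = ∑_d c_d x₀^{d₀} y₀^{d₁} e^{(d₀ a + d₁ b) t}`.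
Since `b / a` is irrational the exponents `d₀ a + d₁ b` are pairwise distinct, and exponentials
with distinct exponents are linearly independent, so every `c_d x₀^{d₀} y₀^{d₁}` vanishes.
-/

open MvPolynomial

theorem hasDerivAt_cexp_mul_zero (l : ℂ) : HasDerivAt (fun t => Complex.exp (l * t)) l 0 := by
  simpa using ((hasDerivAt_id (0 : ℂ)).const_mul l).cexp

theorem cexp_mul_injective : Function.Injective fun (l : ℂ) (t : ℂ) => Complex.exp (l * t) := by
  intro l m h
  beta_reduce at h
  exact (hasDerivAt_cexp_mul_zero l).unique (h ▸ hasDerivAt_cexp_mul_zero m)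

/-- The functions `t ↦ exp (l * t)` are distinct characters of `(ℂ, +)`, so Dedekind's lemma
applies. -/
theorem linearIndependent_cexp_mul :
    LinearIndependent ℂ fun (l : ℂ) (t : ℂ) => Complex.exp (l * t) :=
  (linearIndependent_monoidHom (Multiplicative ℂ) ℂ).comp
    (fun l => Complex.expMonoidHom.comp (AddMonoidHom.mulLeft l).toMultiplicative)
    fun _ _ h => cexp_mul_injective (congrArg DFunLike.coe h)

theorem prod_cexp_mul_mul_pow {σ : Type*} [Fintype σ] (w p : σ → ℂ) (t : ℂ) (d : σ →₀ ℕ) :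
    ∏ i, (Complex.exp (w i * t) * p i) ^ d i
      = Complex.exp ((∑ i, (d i : ℂ) * w i) * t) * ∏ i, p i ^ d i := by
  simp_rw [mul_pow, Finset.prod_mul_distrib, ← Complex.exp_nat_mul, ← Complex.exp_sum,
    Finset.sum_mul, mul_assoc]

theorem MvPolynomial.eq_zero_of_eval_cexp_orbit {σ : Type*} [Fintype σ] {w p : σ → ℂ}
    (hw : Function.Injective fun d : σ →₀ ℕ => ∑ i, (d i : ℂ) * w i) (hp : ∀ i, p i ≠ 0)
    {f : MvPolynomial σ ℂ} (hf : ∀ t, eval (fun i => Complex.exp (w i * t) * p i) f = 0) :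
    f = 0 := by
  have hcoeff : ∀ d ∈ f.support, coeff d f * ∏ i, p i ^ d i = 0 := by
    refine linearIndependent_iff'.mp (linearIndependent_cexp_mul.comp _ hw) f.support _ ?_
    funext t
    rw [Pi.zero_apply, ← hf t, eval_eq']
    simp only [Finset.sum_apply, Pi.smul_apply, Function.comp_apply, smul_eq_mul,
      prod_cexp_mul_mul_pow]
    exact Finset.sum_congr rfl fun d _ => by ring
  ext d
  by_contra hd
  exact mul_ne_zero hd (Finset.prod_ne_zero_iff.mpr fun i _ => pow_ne_zero _ (hp i))
    (hcoeff d (mem_support_iff.mpr hd))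

theorem eq_of_nat_mul_add_nat_mul_eq {K : Type*} [Field K] [CharZero K] {a b : K} (ha : a ≠ 0)
    (hba : ¬ ∃ q : ℚ, (q : K) = b / a) {m n m' n' : ℕ}
    (h : m * a + n * b = m' * a + n' * b) : m = m' ∧ n = n' := by
  obtain hn | hn := eq_or_ne n n'
  · subst hn
    exact ⟨by exact_mod_cast mul_right_cancel₀ ha (add_right_cancel h), rfl⟩
  · refine absurd ⟨(m - m') / (n' - n), ?_⟩ hba
    have hden : (n' : K) - n ≠ 0 := sub_ne_zero.mpr (Nat.cast_injective.ne hn.symm)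
    push_cast
    rw [div_eq_div_iff hden ha]
    linear_combination h

theorem sum_nat_mul_injective_of_div_not_rat {K : Type*} [Field K] [CharZero K] {a b : K}
    (ha : a ≠ 0) (hba : ¬ ∃ q : ℚ, (q : K) = b / a) :
    Function.Injective fun d : Fin 2 →₀ ℕ => ∑ i, (d i : K) * ![a, b] i := by
  intro d e h
  simp only [Fin.sum_univ_two, Matrix.cons_val_zero, Matrix.cons_val_one] at h
  obtain ⟨h0, h1⟩ := eq_of_nat_mul_add_nat_mul_eq ha hba h
  ext i
  fin_cases i
  exacts [h0, h1]

theorem poly_vanishing_on_exp_orbit_eq_zero_general (a b : ℂ) (ha : a ≠ 0)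
    (hirr : ¬ ∃ q : ℚ, (q : ℂ) = b / a) (x₀ y₀ : ℂ) (hx : x₀ ≠ 0) (hy : y₀ ≠ 0)
    (f : MvPolynomial (Fin 2) ℂ)
    (hf : ∀ t : ℂ, eval ![Complex.exp (a * t) * x₀, Complex.exp (b * t) * y₀] f = 0) :
    f = 0 := by
  refine eq_zero_of_eval_cexp_orbit (w := ![a, b]) (p := ![x₀, y₀])
    (sum_nat_mul_injective_of_div_not_rat ha hirr) (Fin.forall_fin_two.mpr ⟨hx, hy⟩) fun t => ?_
  rw [← hf t]
  congr 2
  ext i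
  fin_cases i <;> rfl

/-- **Statement 19.** Let `a, b` be nonzero complex numbers with `b/a` irrational (not a
rational number), and `x₀, y₀` nonzero.  If a polynomial `f ∈ ℂ[x,y]` vanishes on the whole
orbit `{(e^{at}x₀, e^{bt}y₀) : t ∈ ℂ}` of the one-parameter diagonal group, then `f = 0`;
hence no algebraic curve in the affine plane contains this orbit. -/
theorem poly_vanishing_on_exp_orbit_eq_zero (a b : ℂ) (ha : a ≠ 0) (hb : b ≠ 0)
    (hirr : ¬ ∃ q : ℚ, (q : ℂ) = b / a) (x₀ y₀ : ℂ) (hx : x₀ ≠ 0) (hy : y₀ ≠ 0)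
    (f : MvPolynomial (Fin 2) ℂ)
    (hf : ∀ t : ℂ, eval ![Complex.exp (a * t) * x₀, Complex.exp (b * t) * y₀] f = 0) :
    f = 0 :=
  poly_vanishing_on_exp_orbit_eq_zero_general a b ha hirr x₀ y₀ hx hy f hf
end
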